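/- arXiv:math/0603447 — 2 statements merged into one kernel-verified Lean document; each statement's English description precedes it below -/
import Mathlib

section
/- For any probability measure π on 𝒳×{−1,1} and any measurable function f:𝒳→ℝ, the excess Bayes risk is bounded by the excess hinge risk: R(f) − R* ≤ A(f) − A*, where R(f) = R(sign(f)). -/
open MeasureTheory
open scoped ENNReal NNReal

noncomputable section

namespace AggClass

variable {X : Type*} [MeasurableSpace X]

/-- The sign function, with the convention `sgn 0 = 1`. -/
def sgn (t : ℝ) : ℝ := if 0 ≤ t then 1 else -1

/-- The Bayes rule `f*(x) = sign (2 η x - 1)`. -/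
def bayes (η : X → ℝ) : X → ℝ := fun x => sgn (2 * η x - 1)

/-- The hinge risk `A(f) = E[max (1 - Y f(X)) 0]`, as an extended nonnegative real. -/
def hingeRiskE (π : Measure (X × ℝ)) (f : X → ℝ) : ℝ≥0∞ :=
  ∫⁻ p, ENNReal.ofReal (max (1 - p.2 * f p.1) 0) ∂π

/-- The optimal hinge risk `A* = inf {A(f) : f : X → ℝ measurable}`. -/
def optHingeRiskE (π : Measure (X × ℝ)) : ℝ≥0∞ :=
  ⨅ (f : X → ℝ) (_ : Measurable f), hingeRiskE π f

/-- The hinge risk, real-valued. -/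
def hingeRisk (π : Measure (X × ℝ)) (f : X → ℝ) : ℝ := (hingeRiskE π f).toReal

/-- The optimal hinge risk, real-valued. -/
def optHingeRisk (π : Measure (X × ℝ)) : ℝ := (optHingeRiskE π).toReal

/-- The misclassification risk `R(f) = π (Y ≠ sign (f X))`, ℝ≥0∞-valued. -/
def misRiskE (π : Measure (X × ℝ)) (f : X → ℝ) : ℝ≥0∞ :=
  π {p : X × ℝ | p.2 ≠ sgn (f p.1)}

/-- The misclassification risk, real-valued. -/
def misRisk (π : Measure (X × ℝ)) (f : X → ℝ) : ℝ := (misRiskE π f).toReal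

/-- `π` is a joint law of a pair (X,Y) on `X × {-1,1}` with regression function
`η x = π(Y = 1 ∣ X = x)`. -/
structure IsClassif (π : Measure (X × ℝ)) (η : X → ℝ) : Prop where
  labels : π {p : X × ℝ | p.2 = 1 ∨ p.2 = -1}ᶜ = 0
  meas : Measurable η
  mem01 : ∀ x, η x ∈ Set.Icc (0 : ℝ) 1
  cond : ∀ B : Set X, MeasurableSet B →
    π (B ×ˢ ({1} : Set ℝ)) = ∫⁻ x in B, ENNReal.ofReal (η x) ∂(π.map Prod.fst)

/-- Margin assumption MA(κ) with constant c₀ : for every measurable prediction rule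
`f : X → {-1,1}`, `E[|f(X) - f*(X)|] ≤ c₀ (R(f) - R*)^(1/κ)`. -/
def MA (π : Measure (X × ℝ)) (η : X → ℝ) (κ c₀ : ℝ) : Prop :=
  ∀ f : X → ℝ, Measurable f → (∀ x, f x = 1 ∨ f x = -1) →
    ∫ x, |f x - bayes η x| ∂(π.map Prod.fst)
      ≤ c₀ * (misRisk π f - misRisk π (bayes η)) ^ (1 / κ)

/-- Margin assumption for the hinge risk MAH(κ) with constant c : for every measurable
`f : X → [-1,1]`, `E[|f(X) - f*(X)|] ≤ c (A(f) - A*)^(1/κ)`. -/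
def MAH (π : Measure (X × ℝ)) (η : X → ℝ) (κ c : ℝ) : Prop :=
  ∀ f : X → ℝ, Measurable f → (∀ x, f x ∈ Set.Icc (-1 : ℝ) 1) →
    ∫ x, |f x - bayes η x| ∂(π.map Prod.fst)
      ≤ c * (hingeRisk π f - optHingeRisk π) ^ (1 / κ)

/-- Convex combination of f₁,…,f_M with weights w. -/
def convComb {M : ℕ} (f : Fin M → X → ℝ) (w : Fin M → ℝ) : X → ℝ :=
  fun x => ∑ j, w j * f j x

/-- The set of hinge risks of the elements of the convex hull of f₁,…,f_M. -/
def convRiskSet (π : Measure (X × ℝ)) {M : ℕ} (f : Fin M → X → ℝ) : Set ℝ :=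
  {a | ∃ w : Fin M → ℝ, (∀ j, 0 ≤ w j) ∧ (∑ j, w j) = 1 ∧ a = hingeRisk π (convComb f w)}

/-- The law of an i.i.d. sample of size n from π. -/
def sample {α : Type*} [MeasurableSpace α] (π : Measure α) [SigmaFinite π] (n : ℕ) :
    Measure (Fin n → α) :=
  Measure.pi fun _ => π

/-- The empirical hinge risk on the sample D. -/
def empHinge {n : ℕ} (D : Fin n → X × ℝ) (f : X → ℝ) : ℝ :=
  (n : ℝ)⁻¹ * ∑ i, max (1 - (D i).2 * f (D i).1) 0

/-- The empirical misclassification risk on the sample D. -/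
def empMis {n : ℕ} (D : Fin n → X × ℝ) (f : X → ℝ) : ℝ :=
  (n : ℝ)⁻¹ * ∑ i, if (D i).2 ≠ f (D i).1 then (1 : ℝ) else 0

/-- The set of indices minimizing the empirical hinge risk. -/
def ermSet {n M : ℕ} (f : Fin M → X → ℝ) (D : Fin n → X × ℝ) : Finset (Fin M) :=
  Finset.univ.filter fun j => ∀ k, empHinge D (f j) ≤ empHinge D (f k)

/-- `tf` is an empirical risk minimization (ERM) aggregate for the hinge loss. -/
def IsERM {n M : ℕ} (f : Fin M → X → ℝ) (tf : (Fin n → X × ℝ) → X → ℝ) : Prop :=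
  ∀ D, ∃ j ∈ ermSet f D, tf D = f j

/-- `tf` is the averaged ERM (AERM) aggregate for the hinge loss. -/
def IsAERM {n M : ℕ} (f : Fin M → X → ℝ) (tf : (Fin n → X × ℝ) → X → ℝ) : Prop :=
  ∀ D, tf D = fun x => ((ermSet f D).card : ℝ)⁻¹ * ∑ j ∈ ermSet f D, f j x

/-- The exponential weights for the hinge loss. -/
def aewWeight {n M : ℕ} (f : Fin M → X → ℝ) (D : Fin n → X × ℝ) (j : Fin M) : ℝ :=
  Real.exp (-(n : ℝ) * empHinge D (f j)) / ∑ k, Real.exp (-(n : ℝ) * empHinge D (f k))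

/-- `tf` is the aggregation-with-exponential-weights (AEW) aggregate for the hinge loss. -/
def IsAEW {n M : ℕ} (f : Fin M → X → ℝ) (tf : (Fin n → X × ℝ) → X → ℝ) : Prop :=
  ∀ D, tf D = fun x => ∑ j, aewWeight f D j * f j x

/-- Empirical hinge risk on the first k observations of the sample D. -/
def empHingeK {n : ℕ} (D : Fin n → X × ℝ) (k : ℕ) (f : X → ℝ) : ℝ :=
  (k : ℝ)⁻¹ * ∑ i ∈ Finset.univ.filter (fun i : Fin n => (i : ℕ) < k),
    max (1 - (D i).2 * f (D i).1) 0

/-- The cumulative exponential weights for the hinge loss. -/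
def caewWeight {n M : ℕ} (f : Fin M → X → ℝ) (D : Fin n → X × ℝ) (j : Fin M) : ℝ :=
  (n : ℝ)⁻¹ * ∑ k ∈ Finset.Icc 1 n,
    Real.exp (-(k : ℝ) * empHingeK D k (f j)) /
      ∑ l, Real.exp (-(k : ℝ) * empHingeK D k (f l))


/-!
Conditioning on `X` writes both risks as integrals, against the law of `X`, of the conditional
risks `condMisRisk (η x) (f x)` and `condHingeRisk (η x) (f x)` of the score `f x` when `Y = 1`
with probability `η x`. Pointwise, the excess conditional misclassification risk of any score
over the Bayes score `sgn (2η - 1)` is at most its excess conditional hinge risk over that same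
score. Integrating gives `R(f) + A(f*) ≤ A(f) + R(f*)`, and `A* ≤ A(f*)` with `A*` finite.
-/

lemma measurable_sgn : Measurable sgn :=
  Measurable.ite measurableSet_Ici measurable_const measurable_const

def condMisRisk (t a : ℝ) : ℝ := if 0 ≤ a then 1 - t else t

def condHingeRisk (t a : ℝ) : ℝ := t * max (1 - a) 0 + (1 - t) * max (1 + a) 0

lemma condMisRisk_nonneg {t : ℝ} (ht : t ∈ Set.Icc (0 : ℝ) 1) (a : ℝ) : 0 ≤ condMisRisk t a := by
  unfold condMisRisk; split_ifs <;> linarith [ht.1, ht.2]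

lemma condHingeRisk_nonneg {t : ℝ} (ht : t ∈ Set.Icc (0 : ℝ) 1) (a : ℝ) :
    0 ≤ condHingeRisk t a :=
  add_nonneg (mul_nonneg ht.1 (le_max_right _ _))
    (mul_nonneg (by linarith [ht.2]) (le_max_right _ _))

lemma condMisRisk_add_condHingeRisk_sgn_le {t : ℝ} (ht : t ∈ Set.Icc (0 : ℝ) 1) (a : ℝ) :
    condMisRisk t a + condHingeRisk t (sgn (2 * t - 1))
      ≤ condHingeRisk t a + condMisRisk t (sgn (2 * t - 1)) := by
  obtain ⟨h0, h1⟩ := ht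
  have hle₁ : t * (1 - a) ≤ t * max (1 - a) 0 := mul_le_mul_of_nonneg_left (le_max_left _ _) h0
  have hle₂ : (1 - t) * (1 + a) ≤ (1 - t) * max (1 + a) 0 :=
    mul_le_mul_of_nonneg_left (le_max_left _ _) (by linarith)
  have hnn₁ : 0 ≤ t * max (1 - a) 0 := mul_nonneg h0 (le_max_right _ _)
  have hnn₂ : 0 ≤ (1 - t) * max (1 + a) 0 := mul_nonneg (by linarith) (le_max_right _ _)
  unfold condMisRisk condHingeRisk sgn
  split_ifs <;> norm_num <;> nlinarith

lemma measurable_bayes {η : X → ℝ} (hη : Measurable η) : Measurable (bayes η) :=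
  measurable_sgn.comp (by fun_prop)

lemma lintegral_restrict_snd_eq {Y : Type*} [MeasurableSpace Y] [MeasurableSingletonClass Y]
    (ν : Measure (X × Y)) (y : Y) {L : X × Y → ℝ≥0∞} (hL : Measurable L) :
    ∫⁻ p in {p | p.2 = y}, L p ∂ν = ∫⁻ x, L (x, y) ∂(ν.restrict {p | p.2 = y}).map Prod.fst := by
  rw [lintegral_map (f := fun x => L (x, y)) (hL.comp measurable_prodMk_right) measurable_fst]
  refine setLIntegral_congr_fun (measurable_snd (measurableSet_singleton y)) fun p hp => ?_
  rw [← hp.out]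

namespace IsClassif

variable {π : Measure (X × ℝ)} {η : X → ℝ}

lemma restrict_label_add (hπ : IsClassif π η) :
    π.restrict {p | p.2 = 1} + π.restrict {p | p.2 = -1} = π := by
  have hS : MeasurableSet {p : X × ℝ | p.2 = -1} := measurable_snd (measurableSet_singleton _)
  rw [← Measure.restrict_union (by
    rw [Set.disjoint_left]; rintro p (h1 : p.2 = 1) (h2 : p.2 = -1); norm_num [h1] at h2) hS]
  exact Measure.restrict_eq_self_of_ae_mem (measure_eq_zero_iff_ae_notMem.1 hπ.labels |>.mono
    fun _ hp => not_not.1 hp)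

lemma map_fst_restrict_label_one (hπ : IsClassif π η) :
    (π.restrict {p | p.2 = 1}).map Prod.fst
      = (π.map Prod.fst).withDensity fun x => ENNReal.ofReal (η x) := by
  ext B hB
  rw [Measure.map_apply measurable_fst hB, Measure.restrict_apply (measurable_fst hB),
    withDensity_apply _ hB, ← hπ.cond B hB]
  rfl

lemma map_fst_restrict_label_neg_one [IsFiniteMeasure π] (hπ : IsClassif π η) :
    (π.restrict {p | p.2 = -1}).map Prod.fst
      = (π.map Prod.fst).withDensity fun x => ENNReal.ofReal (1 - η x) := by
  have hsum : (π.map Prod.fst).withDensity (fun x => ENNReal.ofReal (η x))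
      + (π.map Prod.fst).withDensity (fun x => ENNReal.ofReal (1 - η x)) = π.map Prod.fst := by
    rw [← withDensity_add_left hπ.meas.ennreal_ofReal]
    conv_rhs => rw [← withDensity_one (μ := π.map Prod.fst)]
    refine congrArg _ (funext fun x => ?_)
    rw [Pi.add_apply, ← ENNReal.ofReal_add (hπ.mem01 x).1 (by linarith [(hπ.mem01 x).2])]
    simp
  conv at hsum => rhs; rw [← hπ.restrict_label_add]
  rw [Measure.map_add _ _ measurable_fst, ← hπ.map_fst_restrict_label_one] at hsum
  ext B hB
  exact (ENNReal.add_right_inj (measure_ne_top _ B)).1 (congrArg (· B) hsum).symm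

lemma lintegral_eq [IsFiniteMeasure π] (hπ : IsClassif π η) {L : X × ℝ → ℝ≥0∞}
    (hL : Measurable L) :
    ∫⁻ p, L p ∂π = ∫⁻ x, ENNReal.ofReal (η x) * L (x, 1)
      + ENNReal.ofReal (1 - η x) * L (x, -1) ∂π.map Prod.fst := by
  have hL₁ : Measurable fun x => L (x, 1) := hL.comp measurable_prodMk_right
  have hL₂ : Measurable fun x => L (x, -1) := hL.comp measurable_prodMk_right
  conv_lhs => rw [← hπ.restrict_label_add]
  rw [lintegral_add_measure, lintegral_restrict_snd_eq _ _ hL, lintegral_restrict_snd_eq _ _ hL,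
    hπ.map_fst_restrict_label_one, hπ.map_fst_restrict_label_neg_one,
    lintegral_withDensity_eq_lintegral_mul _ hπ.meas.ennreal_ofReal hL₁,
    lintegral_withDensity_eq_lintegral_mul _ (f := fun x => ENNReal.ofReal (1 - η x))
      (measurable_const.sub hπ.meas).ennreal_ofReal hL₂,
    ← lintegral_add_left (hπ.meas.ennreal_ofReal.mul hL₁)]
  rfl

lemma hingeRiskE_eq [IsFiniteMeasure π] (hπ : IsClassif π η) {g : X → ℝ} (hg : Measurable g) :
    hingeRiskE π g = ∫⁻ x, ENNReal.ofReal (condHingeRisk (η x) (g x)) ∂π.map Prod.fst := by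
  rw [hingeRiskE, hπ.lintegral_eq (by fun_prop)]
  refine lintegral_congr fun x => ?_
  obtain ⟨h0, h1⟩ := hπ.mem01 x
  rw [condHingeRisk, ENNReal.ofReal_add (by positivity) (mul_nonneg (by linarith) (by positivity)),
    ENNReal.ofReal_mul h0, ENNReal.ofReal_mul (by linarith)]
  ring_nf

lemma misRiskE_eq [IsFiniteMeasure π] (hπ : IsClassif π η) {g : X → ℝ} (hg : Measurable g) :
    misRiskE π g = ∫⁻ x, ENNReal.ofReal (condMisRisk (η x) (g x)) ∂π.map Prod.fst := by
  have hT : MeasurableSet {p : X × ℝ | p.2 ≠ sgn (g p.1)} :=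
    (measurableSet_eq_fun measurable_snd (measurable_sgn.comp (hg.comp measurable_fst))).compl
  rw [misRiskE, ← lintegral_indicator_one hT, hπ.lintegral_eq (measurable_one.indicator hT)]
  refine lintegral_congr fun x => ?_
  by_cases hx : 0 ≤ g x <;> norm_num [condMisRisk, sgn, hx, Set.indicator_apply]

lemma misRiskE_add_hingeRiskE_bayes_le [IsFiniteMeasure π] (hπ : IsClassif π η) {f : X → ℝ}
    (hf : Measurable f) :
    misRiskE π f + hingeRiskE π (bayes η) ≤ hingeRiskE π f + misRiskE π (bayes η) := by
  have hb := measurable_bayes hπ.meas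
  have hη := hπ.meas
  rw [hπ.misRiskE_eq hf, hπ.misRiskE_eq hb, hπ.hingeRiskE_eq hf, hπ.hingeRiskE_eq hb,
    ← lintegral_add_left (f := fun x => ENNReal.ofReal (condHingeRisk (η x) (f x)))
      (by unfold condHingeRisk; fun_prop)]
  refine (le_lintegral_add _ _).trans (lintegral_mono fun x => ?_)
  have ht := hπ.mem01 x
  rw [← ENNReal.ofReal_add (condMisRisk_nonneg ht _) (condHingeRisk_nonneg ht _),
    ← ENNReal.ofReal_add (condHingeRisk_nonneg ht _) (condMisRisk_nonneg ht _)]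
  exact ENNReal.ofReal_le_ofReal (condMisRisk_add_condHingeRisk_sgn_le ht (f x))

end IsClassif

lemma optHingeRiskE_le_hingeRiskE (π : Measure (X × ℝ)) {g : X → ℝ} (hg : Measurable g) :
    optHingeRiskE π ≤ hingeRiskE π g :=
  iInf₂_le g hg

lemma optHingeRiskE_ne_top (π : Measure (X × ℝ)) [IsFiniteMeasure π] : optHingeRiskE π ≠ ⊤ :=
  ne_top_of_le_ne_top (by simp [hingeRiskE]) (optHingeRiskE_le_hingeRiskE π (g := fun _ => 0)
    measurable_const)

/-- R(f) - R* ≤ A(f) - A* for any measurable f : X → ℝ. -/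
theorem excess_bayes_risk_le_excess_hinge_risk
    (π : Measure (X × ℝ)) [IsProbabilityMeasure π] (η : X → ℝ)
    (hπ : IsClassif π η) (f : X → ℝ) (hf : Measurable f) :
    misRiskE π f - misRiskE π (bayes η) ≤ hingeRiskE π f - optHingeRiskE π := by
  rw [tsub_le_iff_right]
  refine ENNReal.le_of_add_le_add_right (optHingeRiskE_ne_top π) ?_
  calc misRiskE π f + optHingeRiskE π ≤ misRiskE π f + hingeRiskE π (bayes η) :=
        add_le_add_right (optHingeRiskE_le_hingeRiskE π (measurable_bayes hπ.meas)) _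
    _ ≤ hingeRiskE π f + misRiskE π (bayes η) := hπ.misRiskE_add_hingeRiskE_bayes_le hf
    _ = hingeRiskE π f - optHingeRiskE π + misRiskE π (bayes η) + optHingeRiskE π := by
        rw [add_right_comm, tsub_add_cancel_of_le (optHingeRiskE_le_hingeRiskE π hf)]

end AggClass
end
end

section
/- (Corollary 1, lower bound) Let κ ≥ 1 and let M ≥ 3 and n be integers with 2 log₂ M ≤ n, and assume 𝒳 is infinite. For every a > 0 there exist a constant C(a) > 0 depending only on a and κ and a set ℱ = {f₁,…,f_M} of measurable prediction rules 𝒳→{−1,1} such that for every classifier f̄_n (any measurable function of the sample D_n and of X with values in {−1,1}) there exists a probability measure π satisfying MA(κ) for which E[R(f̄_n) − R*] ≥ 2(1+a) min_{f∈ℱ}(R(f)−R*) + C(a) ((log M)/n)^{κ/(2κ−1)}. -/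
open MeasureTheory
open scoped ENNReal NNReal

noncomputable section

namespace AggClass

variable {X : Type*} [MeasurableSpace X]

/-!
Assouad's hypercube argument. Put mass `w = 1 / (8 m)` on each of `m = ⌊log₂ M⌋` points and the
rest on one further point, and let the label at the `i`-th point be `σᵢ = ±1` with probability
`(1 + h) / 2`, where `h = (log M / n) ^ (κ / (2κ - 1))`. The `2 ^ m ≤ M` Bayes rules of these laws
form the family, so the oracle term vanishes, and the margin assumption holds because a rule that
leaves the Bayes rule on the support pays at least `w h`. Misclassifying the `i`-th point costs
`w h`. Two laws differing only in `σᵢ` have Hellinger affinity `1 - w + w √(1 - h²)`, whose `n`-th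
power stays above `3 / 4` since `n w h² ≤ 1 / 4`, so by Le Cam's bound the probabilities that a
rule errs at that point under the two laws add up to at least `1 / 4`. Averaging over the cube
yields a law under which the expected excess risk is at least `m w h / 8 = h / 64`.
-/

def weightedDirac {α ι : Type*} [MeasurableSpace α] [Fintype ι] (q : ι → ℝ) (a : ι → α) :
    Measure α :=
  ∑ k, ENNReal.ofReal (q k) • Measure.dirac (a k)

section WeightedDirac

variable {α ι : Type*} [MeasurableSpace α] [Fintype ι] {q : ι → ℝ} (a : ι → α)

lemma weightedDirac_apply [MeasurableSingletonClass α] (s : Set α) :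
    weightedDirac q a s = ∑ k, ENNReal.ofReal (q k) * s.indicator 1 (a k) := by
  simp [weightedDirac, Measure.finsetSum_apply, Measure.dirac_apply]

open scoped Classical in
lemma weightedDirac_apply_eq_ofReal [MeasurableSingletonClass α] (hq : ∀ k, 0 ≤ q k)
    (s : Set α) :
    weightedDirac q a s = ENNReal.ofReal (∑ k, q k * if a k ∈ s then 1 else 0) := by
  rw [weightedDirac_apply, ENNReal.ofReal_sum_of_nonneg fun k _ => by
    have := hq k; positivity]
  refine Finset.sum_congr rfl fun k _ => ?_
  by_cases hk : a k ∈ s <;> simp [hk]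

open scoped Classical in
lemma weightedDirac_apply_toReal [MeasurableSingletonClass α] (hq : ∀ k, 0 ≤ q k) (s : Set α) :
    (weightedDirac q a s).toReal = ∑ k, q k * if a k ∈ s then 1 else 0 := by
  rw [weightedDirac_apply_eq_ofReal a hq, ENNReal.toReal_ofReal]
  exact Finset.sum_nonneg fun k _ => by have := hq k; positivity

lemma isProbabilityMeasure_weightedDirac (hq : ∀ k, 0 ≤ q k) (hq1 : ∑ k, q k = 1) :
    IsProbabilityMeasure (weightedDirac q a) := by
  constructor
  simp only [weightedDirac, Measure.finsetSum_apply, Measure.smul_apply, measure_univ,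
    smul_eq_mul, mul_one]
  rw [← ENNReal.ofReal_sum_of_nonneg fun k _ => hq k, hq1, ENNReal.ofReal_one]

lemma pi_weightedDirac (hq : ∀ k, 0 ≤ q k) (hq1 : ∑ k, q k = 1) (n : ℕ) :
    Measure.pi (fun _ : Fin n => weightedDirac q a)
      = weightedDirac (fun v : Fin n → ι => ∏ i, q (v i)) (fun v i => a (v i)) := by
  classical
  have := isProbabilityMeasure_weightedDirac a hq hq1
  refine Measure.pi_eq fun s hs => ?_
  simp only [weightedDirac, Measure.finsetSum_apply, Measure.smul_apply, smul_eq_mul,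
    Measure.dirac_apply' _ (MeasurableSet.univ_pi hs), Measure.dirac_apply' _ (hs _),
    ENNReal.ofReal_prod_of_nonneg fun i _ => hq _, Fintype.prod_sum]
  refine Finset.sum_congr rfl fun v _ => ?_
  simp [Set.indicator_apply, Finset.prod_ite_zero]

lemma integral_weightedDirac [MeasurableSingletonClass α] (hq : ∀ k, 0 ≤ q k) (f : α → ℝ) :
    ∫ x, f x ∂weightedDirac q a = ∑ k, q k * f (a k) := by
  rw [weightedDirac, integral_finsetSum_measure fun k _ =>
    (integrable_dirac enorm_lt_top).smul_measure ENNReal.ofReal_ne_top]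
  simp [integral_smul_measure, integral_dirac, ENNReal.toReal_ofReal (hq _)]

lemma lintegral_weightedDirac [MeasurableSingletonClass α] (f : α → ℝ≥0∞) :
    ∫⁻ x, f x ∂weightedDirac q a = ∑ k, ENNReal.ofReal (q k) * f (a k) := by
  simp [weightedDirac, lintegral_finsetSum_measure, lintegral_smul_measure, lintegral_dirac]

lemma map_weightedDirac {β : Type*} [MeasurableSpace β] {g : α → β} (hg : Measurable g) :
    (weightedDirac q a).map g = weightedDirac q (g ∘ a) := by
  ext s hs
  simp only [weightedDirac, Measure.map_apply hg hs, Measure.finsetSum_apply, Measure.smul_apply,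
    smul_eq_mul, Function.comp_apply, Measure.dirac_apply' _ hs, Measure.dirac_apply' _ (hg hs)]
  rfl

open scoped Classical in
lemma setLIntegral_ofReal_weightedDirac [MeasurableSingletonClass α] (hq : ∀ k, 0 ≤ q k)
    {f : α → ℝ} (hf : ∀ x, 0 ≤ f x) {B : Set α} (hB : MeasurableSet B) :
    ∫⁻ x in B, ENNReal.ofReal (f x) ∂weightedDirac q a
      = ENNReal.ofReal (∑ k, q k * if a k ∈ B then f (a k) else 0) := by
  rw [← lintegral_indicator hB, lintegral_weightedDirac,
    ENNReal.ofReal_sum_of_nonneg fun k _ => by have := hq k; have := hf (a k); positivity]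
  refine Finset.sum_congr rfl fun k _ => ?_
  by_cases hk : a k ∈ B <;> simp [hk, ENNReal.ofReal_mul (hq k)]

end WeightedDirac

section TwoPoint

variable {κ : Type*} [Fintype κ]

lemma sq_sum_sqrt_mul_le_two_mul_sum_min {P Q : κ → ℝ} (hP : ∀ k, 0 ≤ P k) (hQ : ∀ k, 0 ≤ Q k)
    (hPQ : ∑ k, P k + ∑ k, Q k = 2) :
    (∑ k, √(P k * Q k)) ^ 2 ≤ 2 * ∑ k, min (P k) (Q k) := by
  have hmin : ∀ k, 0 ≤ min (P k) (Q k) := fun k => le_min (hP k) (hQ k)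
  have hmax : ∀ k, 0 ≤ max (P k) (Q k) := fun k => le_max_of_le_left (hP k)
  calc (∑ k, √(P k * Q k)) ^ 2
      = (∑ k, √(min (P k) (Q k)) * √(max (P k) (Q k))) ^ 2 := by
        simp_rw [← Real.sqrt_mul (hmin _), min_mul_max]
    _ ≤ (∑ k, √(min (P k) (Q k)) ^ 2) * ∑ k, √(max (P k) (Q k)) ^ 2 :=
        Finset.sum_mul_sq_le_sq_mul_sq _ _ _
    _ = (∑ k, min (P k) (Q k)) * ∑ k, max (P k) (Q k) := by
        simp_rw [Real.sq_sqrt (hmin _), Real.sq_sqrt (hmax _)]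
    _ ≤ (∑ k, min (P k) (Q k)) * 2 := by
        gcongr
        · exact Finset.sum_nonneg fun k _ => hmin k
        · rw [← hPQ, ← Finset.sum_add_distrib]
          exact Finset.sum_le_sum fun k _ => max_le_add_of_nonneg (hP k) (hQ k)
    _ = 2 * ∑ k, min (P k) (Q k) := mul_comm _ _

/-- Le Cam's two-point bound. -/
lemma sq_sum_sqrt_mul_div_two_le {P Q : κ → ℝ} (hP : ∀ k, 0 ≤ P k) (hQ : ∀ k, 0 ≤ Q k)
    (hP1 : ∑ k, P k = 1) (hQ1 : ∑ k, Q k = 1) {A B : κ → Prop} [DecidablePred A]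
    [DecidablePred B] (hAB : ∀ k, A k ∨ B k) :
    (∑ k, √(P k * Q k)) ^ 2 / 2
      ≤ ∑ k, P k * (if A k then 1 else 0) + ∑ k, Q k * (if B k then 1 else 0) := by
  have hcover : ∑ k, min (P k) (Q k)
      ≤ ∑ k, P k * (if A k then 1 else 0) + ∑ k, Q k * (if B k then 1 else 0) := by
    rw [← Finset.sum_add_distrib]
    refine Finset.sum_le_sum fun k _ => ?_
    rcases hAB k with hk | hk
    · have := mul_nonneg (hQ k) (by split_ifs <;> norm_num : (0 : ℝ) ≤ if B k then 1 else 0)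
      simp only [hk, if_true, mul_one]
      linarith [min_le_left (P k) (Q k)]
    · have := mul_nonneg (hP k) (by split_ifs <;> norm_num : (0 : ℝ) ≤ if A k then 1 else 0)
      simp only [hk, if_true, mul_one]
      linarith [min_le_right (P k) (Q k)]
  have := sq_sum_sqrt_mul_le_two_mul_sum_min hP hQ (by rw [hP1, hQ1]; norm_num)
  linarith

end TwoPoint

section Tensorization

variable {ι : Type*} [Fintype ι] (p q : ι → ℝ) (n : ℕ)

lemma sum_sqrt_prod_mul_prod (hp : ∀ k, 0 ≤ p k) (hq : ∀ k, 0 ≤ q k) :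
    ∑ v : Fin n → ι, √((∏ i, p (v i)) * ∏ i, q (v i)) = (∑ k, √(p k * q k)) ^ n := by
  simp_rw [← Finset.prod_mul_distrib,
    Real.sqrt_prod _ fun i _ => mul_nonneg (hp _) (hq _)]
  exact (Fintype.sum_pow (fun k => √(p k * q k)) n).symm

end Tensorization

/-- `1 - w + w √(1 - h²)` is the Hellinger affinity of the two laws at the ends of a hypercube
edge. -/
lemma one_fourth_le_sq_pow_affinity_div_two {w h : ℝ} (hw0 : 0 ≤ w) (hw1 : w ≤ 1) (hh0 : 0 ≤ h)
    (hh1 : h ≤ 1) {n : ℕ} (hn : n * (w * h ^ 2) ≤ 1 / 4) :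
    1 / 4 ≤ ((1 - w + w * √(1 - h ^ 2)) ^ n) ^ 2 / 2 := by
  have hh2 : 0 ≤ 1 - h ^ 2 := by nlinarith
  have hsqrt : 1 - h ^ 2 ≤ √(1 - h ^ 2) := by
    simpa [Real.sqrt_sq hh2] using Real.sqrt_le_sqrt (by nlinarith : (1 - h ^ 2) ^ 2 ≤ 1 - h ^ 2)
  have hbase : 1 - w * h ^ 2 ≤ 1 - w + w * √(1 - h ^ 2) := by nlinarith
  have hpow : 3 / 4 ≤ (1 - w + w * √(1 - h ^ 2)) ^ n :=
    calc (3 : ℝ) / 4 ≤ 1 + n * -(w * h ^ 2) := by linarith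
      _ ≤ (1 + -(w * h ^ 2)) ^ n := one_add_mul_le_pow (by nlinarith) n
      _ ≤ _ := pow_le_pow_left₀ (by nlinarith) (by linarith) n
  nlinarith

/-- Assouad's averaging over the hypercube. -/
lemma exists_le_sum_of_le_add_flip {m : ℕ} (P : (Fin m → Bool) → Fin m → ℝ) {c : ℝ}
    (hP : ∀ σ i, c ≤ P σ i + P (Function.update σ i (!σ i)) i) :
    ∃ σ, m * c / 2 ≤ ∑ i, P σ i := by
  have hcard : (Fintype.card (Fin m → Bool) : ℝ) = 2 ^ m := by simp
  have hflip : ∀ i, ∑ σ, P (Function.update σ i (!σ i)) i = ∑ σ, P σ i := fun i => by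
    have hinv : Function.Involutive fun σ : Fin m → Bool => Function.update σ i (!σ i) :=
      fun σ => by simp
    exact Fintype.sum_equiv hinv.toPerm _ _ fun _ => rfl
  have hcoord : ∀ i, 2 ^ m * c / 2 ≤ ∑ σ, P σ i := fun i => by
    have := Finset.sum_le_sum fun σ (_ : σ ∈ Finset.univ) => hP σ i
    rw [Finset.sum_add_distrib, hflip, Finset.sum_const, Finset.card_univ, nsmul_eq_mul,
      hcard] at this
    linarith
  have hsum : ∑ _σ : Fin m → Bool, (m * c / 2) ≤ ∑ σ, ∑ i, P σ i := by
    rw [Finset.sum_comm, Finset.sum_const, Finset.card_univ, nsmul_eq_mul, hcard]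
    calc (2 : ℝ) ^ m * (m * c / 2) = ∑ _i : Fin m, 2 ^ m * c / 2 := by
          rw [Finset.sum_const, Finset.card_univ, Fintype.card_fin, nsmul_eq_mul]
          ring
      _ ≤ ∑ i, ∑ σ, P σ i := Finset.sum_le_sum fun i _ => hcoord i
  obtain ⟨σ, -, hσ⟩ := Finset.exists_le_of_sum_le Finset.univ_nonempty hsum
  exact ⟨σ, hσ⟩

def boolSign (b : Bool) : ℝ := if b then 1 else -1

@[simp] lemma boolSign_true : boolSign true = 1 := rfl

@[simp] lemma boolSign_false : boolSign false = -1 := rfl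

lemma boolSign_not (b : Bool) : boolSign (!b) = -boolSign b := by
  cases b <;> simp

lemma boolSign_ne_neg (b : Bool) : boolSign b ≠ -boolSign b := by
  cases b <;> norm_num

lemma sgn_eq_one_or (t : ℝ) : sgn t = 1 ∨ sgn t = -1 := by
  unfold sgn; split_ifs <;> simp

lemma sgn_eq_self {u : ℝ} (hu : u = 1 ∨ u = -1) : sgn u = u := by
  rcases hu with rfl | rfl <;> norm_num [sgn]

lemma sgn_boolSign_mul {c : ℝ} (hc : 0 < c) (b : Bool) : sgn (boolSign b * c) = boolSign b := by
  cases b <;> simp [sgn, hc.le, hc]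

lemma bayes_eq_one_or {α : Type*} (η : α → ℝ) (x : α) : bayes η x = 1 ∨ bayes η x = -1 :=
  sgn_eq_one_or _

/-- The hypercube of laws behind the lower bound: the marginal puts `mass` on each `pt i` and
the remaining `1 - m mass` on `base`; at `pt i` the label is `σ i` with probability
`(1 + bias) / 2`, at `base` it is `1`. -/
structure Hypercube (α : Type*) (m : ℕ) where
  base : α
  pt : Fin m → α
  pt_injective : Function.Injective pt
  base_ne_pt : ∀ i, base ≠ pt i
  mass : ℝ
  bias : ℝ
  mass_pos : 0 < mass
  succ_mul_mass_le_one : ((m : ℝ) + 1) * mass ≤ 1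
  bias_pos : 0 < bias
  bias_le_one : bias ≤ 1

namespace Hypercube

section Combinatorics

variable {α : Type*} {m : ℕ} (H : Hypercube α m)

def atom : Option (Fin m × Bool) → α × ℝ
  | none => (H.base, 1)
  | some (i, b) => (H.pt i, boolSign b)

def weight (σ : Fin m → Bool) : Option (Fin m × Bool) → ℝ
  | none => 1 - m * H.mass
  | some (i, b) => H.mass * (1 + boolSign b * boolSign (σ i) * H.bias) / 2

def eta (σ : Fin m → Bool) : α → ℝ :=
  Function.extend H.pt (fun i => (1 + boolSign (σ i) * H.bias) / 2) 1

lemma mass_mul_bias_le_one_sub : H.mass * H.bias ≤ 1 - m * H.mass := by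
  nlinarith [H.succ_mul_mass_le_one, H.mass_pos, H.bias_le_one]

lemma one_sub_mul_mass_pos : 0 < 1 - m * H.mass := by
  linarith [H.mass_mul_bias_le_one_sub, mul_pos H.mass_pos H.bias_pos]

lemma weight_nonneg (σ : Fin m → Bool) (k : Option (Fin m × Bool)) : 0 ≤ H.weight σ k := by
  have := H.mass_pos
  have := H.bias_pos
  have := H.bias_le_one
  rcases k with _ | ⟨i, b⟩
  · exact H.one_sub_mul_mass_pos.le
  · simp only [weight]
    cases b <;> cases σ i <;>
      simp only [boolSign_true, boolSign_false, mul_one, one_mul, mul_neg, neg_mul, neg_neg] <;>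
      nlinarith

lemma sum_weight (σ : Fin m → Bool) : ∑ k, H.weight σ k = 1 := by
  have hpt : ∀ i, H.weight σ (some (i, true)) + H.weight σ (some (i, false)) = H.mass := fun i => by
    simp only [weight, boolSign_true, boolSign_false]; ring
  simp only [Fintype.sum_option, Fintype.sum_prod_type, Fintype.sum_bool, hpt]
  simp [weight]

lemma eta_pt (σ : Fin m → Bool) (i : Fin m) :
    H.eta σ (H.pt i) = (1 + boolSign (σ i) * H.bias) / 2 :=
  H.pt_injective.extend_apply _ _ _

lemma eta_base (σ : Fin m → Bool) : H.eta σ H.base = 1 :=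
  Function.extend_apply' _ _ _ fun ⟨i, hi⟩ => H.base_ne_pt i hi.symm

lemma eta_mem_Icc (σ : Fin m → Bool) (x : α) : H.eta σ x ∈ Set.Icc (0 : ℝ) 1 := by
  by_cases hx : ∃ i, H.pt i = x
  · obtain ⟨i, rfl⟩ := hx
    rw [eta_pt]
    have := H.bias_pos
    have := H.bias_le_one
    cases σ i <;> constructor <;> simp only [boolSign_true, boolSign_false, one_mul, neg_mul] <;>
      linarith
  · simp [eta, Function.extend_apply' _ _ _ hx]

lemma bayes_eta_pt (σ : Fin m → Bool) (i : Fin m) :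
    bayes (H.eta σ) (H.pt i) = boolSign (σ i) := by
  rw [bayes, eta_pt, show 2 * ((1 + boolSign (σ i) * H.bias) / 2) - 1 = boolSign (σ i) * H.bias
    by ring, sgn_boolSign_mul H.bias_pos]

lemma bayes_eta_base (σ : Fin m → Bool) : bayes (H.eta σ) H.base = 1 := by
  norm_num [bayes, eta_base, sgn]

lemma sum_sqrt_weight_mul_weight_flip (σ : Fin m → Bool) (i : Fin m) :
    ∑ k, √(H.weight σ k * H.weight (Function.update σ i (!σ i)) k)
      = 1 - H.mass + H.mass * √(1 - H.bias ^ 2) := by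
  have hnone : √(H.weight σ none * H.weight (Function.update σ i (!σ i)) none)
      = 1 - m * H.mass :=
    Real.sqrt_mul_self H.one_sub_mul_mass_pos.le
  have hedge : ∀ c : ℝ, c ^ 2 = 1 →
      √(H.mass * (1 + c * H.bias) / 2 * (H.mass * (1 + -c * H.bias) / 2))
        = H.mass / 2 * √(1 - H.bias ^ 2) := fun c hc => by
    rw [show H.mass * (1 + c * H.bias) / 2 * (H.mass * (1 + -c * H.bias) / 2)
        = (H.mass / 2) ^ 2 * (1 - H.bias ^ 2) by
          linear_combination (-(H.mass / 2) ^ 2 * H.bias ^ 2) * hc,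
      Real.sqrt_mul (sq_nonneg _), Real.sqrt_sq (by linarith [H.mass_pos])]
  have hpt : ∀ j, ∑ b,
      √(H.weight σ (some (j, b)) * H.weight (Function.update σ i (!σ i)) (some (j, b)))
      = H.mass + if j = i then H.mass * √(1 - H.bias ^ 2) - H.mass else 0 := fun j => by
    by_cases hj : j = i
    · subst hj
      simp only [weight, Function.update_self, boolSign_not, Fintype.sum_bool, if_true, mul_neg]
      rw [hedge _ (by cases σ j <;> norm_num), hedge _ (by cases σ j <;> norm_num)]
      ring
    · have hw : ∀ b, H.weight (Function.update σ i (!σ i)) (some (j, b))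
          = H.weight σ (some (j, b)) := fun b => by simp only [weight, Function.update_of_ne hj]
      simp only [hw, Real.sqrt_mul_self (H.weight_nonneg σ _), Fintype.sum_bool, hj, if_false]
      simp only [weight, boolSign_true, boolSign_false]
      ring
  rw [Fintype.sum_option, Fintype.sum_prod_type, hnone]
  simp only [hpt, Finset.sum_add_distrib, Finset.sum_ite_eq', Finset.mem_univ, if_true,
    Finset.sum_const, Finset.card_univ, Fintype.card_fin, nsmul_eq_mul]
  ring

/-- The probability, under `sample (H.law σ) n`, that `fbar` misclassifies `pt i`, written as a
sum over the samples made of atoms. -/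
def missProb {n : ℕ} (fbar : (Fin n → α × ℝ) → α → ℝ) (σ : Fin m → Bool) (i : Fin m) : ℝ :=
  ∑ v : Fin n → Option (Fin m × Bool), (∏ j, H.weight σ (v j)) *
    if sgn (fbar (fun j => H.atom (v j)) (H.pt i)) ≠ boolSign (σ i) then 1 else 0

lemma one_fourth_le_missProb_add_missProb_flip {n : ℕ} (hn : n * (H.mass * H.bias ^ 2) ≤ 1 / 4)
    (fbar : (Fin n → α × ℝ) → α → ℝ) (σ : Fin m → Bool) (i : Fin m) :
    1 / 4 ≤ H.missProb fbar σ i + H.missProb fbar (Function.update σ i (!σ i)) i := by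
  set σ' := Function.update σ i (!σ i)
  have hmass : H.mass ≤ 1 := by nlinarith [H.succ_mul_mass_le_one, H.mass_pos]
  have hprod : ∀ τ : Fin m → Bool,
      ∑ v : Fin n → Option (Fin m × Bool), ∏ j, H.weight τ (v j) = 1 :=
    fun τ => by rw [← Fintype.sum_pow, sum_weight, one_pow]
  calc (1 : ℝ) / 4 ≤ ((1 - H.mass + H.mass * √(1 - H.bias ^ 2)) ^ n) ^ 2 / 2 :=
        one_fourth_le_sq_pow_affinity_div_two H.mass_pos.le hmass H.bias_pos.le H.bias_le_one hn
    _ = (∑ v : Fin n → Option (Fin m × Bool),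
          √((∏ j, H.weight σ (v j)) * ∏ j, H.weight σ' (v j))) ^ 2 / 2 := by
        rw [sum_sqrt_prod_mul_prod _ _ _ (H.weight_nonneg σ) (H.weight_nonneg σ'),
          sum_sqrt_weight_mul_weight_flip]
    _ ≤ _ := sq_sum_sqrt_mul_div_two_le
        (fun v => Finset.prod_nonneg fun j _ => H.weight_nonneg σ _)
        (fun v => Finset.prod_nonneg fun j _ => H.weight_nonneg σ' _) (hprod σ) (hprod σ')
        fun v => by
          rw [show boolSign (σ' i) = -boolSign (σ i) by simp [σ', boolSign_not]]
          by_contra! h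
          exact boolSign_ne_neg _ (h.1.symm.trans h.2)

lemma exists_of_infinite (α : Type*) [Infinite α] (m : ℕ) {w h : ℝ} (hw : 0 < w)
    (hmw : ((m : ℝ) + 1) * w ≤ 1) (hh0 : 0 < h) (hh1 : h ≤ 1) :
    ∃ H : Hypercube α m, H.mass = w ∧ H.bias = h :=
  let e := Infinite.natEmbedding α
  ⟨{ base := e 0
     pt := fun i => e (i + 1)
     pt_injective := fun i j hij => Fin.ext (by simpa using e.injective hij)
     base_ne_pt := fun i hi => by simpa using e.injective hi
     mass := w
     bias := h
     mass_pos := hw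
     succ_mul_mass_le_one := hmw
     bias_pos := hh0
     bias_le_one := hh1 }, rfl, rfl⟩

end Combinatorics

section Laws

variable {m : ℕ} (H : Hypercube X m)

def law (σ : Fin m → Bool) : Measure (X × ℝ) :=
  weightedDirac (H.weight σ) H.atom

instance isProbabilityMeasure_law (σ : Fin m → Bool) : IsProbabilityMeasure (H.law σ) :=
  isProbabilityMeasure_weightedDirac _ (H.weight_nonneg σ) (H.sum_weight σ)

lemma map_fst_law (σ : Fin m → Bool) :
    (H.law σ).map Prod.fst = weightedDirac (H.weight σ) fun k => (H.atom k).1 :=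
  map_weightedDirac _ measurable_fst

variable [MeasurableSingletonClass X]

lemma measurable_eta (σ : Fin m → Bool) : Measurable (H.eta σ) :=
  MeasurableEmbedding.measurable_extend
    ⟨H.pt_injective, measurable_of_finite _, fun s _ => (s.toFinite.image _).measurableSet⟩
    (measurable_of_finite _) measurable_one

lemma isClassif_law (σ : Fin m → Bool) : IsClassif (H.law σ) (H.eta σ) where
  labels := by
    rw [law, weightedDirac_apply]
    refine Finset.sum_eq_zero fun k _ => ?_
    rcases k with _ | ⟨i, b⟩ <;> [skip; cases b] <;> simp [atom]
  meas := H.measurable_eta σ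
  mem01 := H.eta_mem_Icc σ
  cond B hB := by
    rw [map_fst_law, setLIntegral_ofReal_weightedDirac _ (H.weight_nonneg σ)
      (fun x => (H.eta_mem_Icc σ x).1) hB, law,
      weightedDirac_apply_eq_ofReal _ (H.weight_nonneg σ)]
    congr 1
    simp only [Fintype.sum_option, Fintype.sum_prod_type, Fintype.sum_bool, atom, weight]
    congr 1
    · by_cases hB0 : H.base ∈ B <;> simp [hB0, eta_base]
    · refine Finset.sum_congr rfl fun i _ => ?_
      by_cases hBi : H.pt i ∈ B
      · simp only [boolSign_true, boolSign_false, Set.mem_prod, Set.mem_singleton_iff, hBi,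
          true_and, if_true, eta_pt, one_mul, neg_mul, mul_one, mul_zero, mul_ite]
        cases σ i <;> norm_num <;> ring
      · simp [hBi]

lemma misRisk_law (σ : Fin m → Bool) (g : X → ℝ) :
    misRisk (H.law σ) g
      = (1 - m * H.mass) * (if sgn (g H.base) ≠ 1 then 1 else 0)
        + ∑ i, (H.mass * (1 - H.bias) / 2
          + H.mass * H.bias * if sgn (g (H.pt i)) ≠ boolSign (σ i) then 1 else 0) := by
  rw [misRisk, misRiskE, law, weightedDirac_apply_toReal _ (H.weight_nonneg σ)]
  simp only [Fintype.sum_option, Fintype.sum_prod_type, Fintype.sum_bool, atom, weight,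
    Set.mem_ofPred_eq]
  congr 1
  · rcases sgn_eq_one_or (g H.base) with h | h <;> norm_num [h]
  · refine Finset.sum_congr rfl fun i _ => ?_
    rcases sgn_eq_one_or (g (H.pt i)) with h | h <;> cases σ i <;>
      simp only [h, boolSign_true, boolSign_false] <;> split_ifs <;> first | linarith | norm_num at *

lemma excess_law (σ : Fin m → Bool) (g : X → ℝ) :
    misRisk (H.law σ) g - misRisk (H.law σ) (bayes (H.eta σ))
      = (1 - m * H.mass) * (if sgn (g H.base) ≠ 1 then 1 else 0)
        + ∑ i, H.mass * H.bias * if sgn (g (H.pt i)) ≠ boolSign (σ i) then 1 else 0 := by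
  have hbase : sgn (bayes (H.eta σ) H.base) = 1 := by
    rw [bayes_eta_base, sgn_eq_self (Or.inl rfl)]
  have hpt : ∀ i, sgn (bayes (H.eta σ) (H.pt i)) = boolSign (σ i) := fun i => by
    rw [bayes_eta_pt, sgn_eq_self (by cases σ i <;> simp)]
  simp only [misRisk_law, hbase, hpt, ne_eq, not_true_eq_false, if_false, mul_zero, add_zero,
    zero_add, Finset.sum_add_distrib]
  ring

lemma excess_law_nonneg (σ : Fin m → Bool) (g : X → ℝ) :
    0 ≤ misRisk (H.law σ) g - misRisk (H.law σ) (bayes (H.eta σ)) := by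
  have := mul_pos H.mass_pos H.bias_pos
  rw [excess_law]
  refine add_nonneg (mul_nonneg H.one_sub_mul_mass_pos.le (by split_ifs <;> norm_num))
    (Finset.sum_nonneg fun i _ => mul_nonneg this.le (by split_ifs <;> norm_num))

lemma apply_atom_eq_bayes_of_excess_lt {σ : Fin m → Bool} {f : X → ℝ}
    (hf : ∀ x, f x = 1 ∨ f x = -1)
    (hE : misRisk (H.law σ) f - misRisk (H.law σ) (bayes (H.eta σ)) < H.mass * H.bias)
    (k : Option (Fin m × Bool)) : f (H.atom k).1 = bayes (H.eta σ) (H.atom k).1 := by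
  have hwh := mul_pos H.mass_pos H.bias_pos
  have hone := H.mass_mul_bias_le_one_sub
  rw [excess_law] at hE
  have hsum := Finset.sum_nonneg fun i (_ : i ∈ Finset.univ) =>
    mul_nonneg hwh.le (by split_ifs <;> norm_num :
      (0 : ℝ) ≤ if sgn (f (H.pt i)) ≠ boolSign (σ i) then 1 else 0)
  rcases k with _ | ⟨i, b⟩
  · show f H.base = bayes (H.eta σ) H.base
    rw [bayes_eta_base]
    by_contra hne
    rw [if_pos (by rwa [sgn_eq_self (hf _)])] at hE
    linarith
  · show f (H.pt i) = bayes (H.eta σ) (H.pt i)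
    rw [bayes_eta_pt]
    by_contra hne
    have hi := Finset.single_le_sum (fun j _ => mul_nonneg hwh.le (by split_ifs <;> norm_num :
      (0 : ℝ) ≤ if sgn (f (H.pt j)) ≠ boolSign (σ j) then 1 else 0)) (Finset.mem_univ i)
    rw [if_pos (by rwa [sgn_eq_self (hf _)]), mul_one] at hi
    have := mul_nonneg H.one_sub_mul_mass_pos.le
      (by split_ifs <;> norm_num : (0 : ℝ) ≤ if sgn (f H.base) ≠ 1 then 1 else 0)
    linarith

/-- Every rule that differs from the Bayes rule on the support has excess risk at least
`mass * bias`, while `E|f - f*| ≤ 2`. -/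
lemma margin_law (σ : Fin m → Bool) {κ : ℝ} (hκ : 0 ≤ κ) :
    ∃ c₀ > 0, MA (H.law σ) (H.eta σ) κ c₀ := by
  have hwh := mul_pos H.mass_pos H.bias_pos
  refine ⟨2 / (H.mass * H.bias) ^ (1 / κ), by positivity, fun f _ hf => ?_⟩
  have hE := H.excess_law_nonneg σ f
  rw [map_fst_law, integral_weightedDirac _ (H.weight_nonneg σ)]
  by_cases hlt : misRisk (H.law σ) f - misRisk (H.law σ) (bayes (H.eta σ)) < H.mass * H.bias
  · simp only [H.apply_atom_eq_bayes_of_excess_lt hf hlt, sub_self, abs_zero, mul_zero,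
      Finset.sum_const_zero]
    positivity
  · have habs : ∀ k, |f (H.atom k).1 - bayes (H.eta σ) (H.atom k).1| ≤ 2 := fun k => by
      rcases hf (H.atom k).1 with h | h <;> rcases bayes_eq_one_or (H.eta σ) (H.atom k).1 with
        h' | h' <;> norm_num [h, h']
    calc ∑ k, H.weight σ k * |f (H.atom k).1 - bayes (H.eta σ) (H.atom k).1|
        ≤ ∑ k, H.weight σ k * 2 :=
          Finset.sum_le_sum fun k _ => mul_le_mul_of_nonneg_left (habs k) (H.weight_nonneg σ k)
      _ = 2 / (H.mass * H.bias) ^ (1 / κ) * (H.mass * H.bias) ^ (1 / κ) := by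
          rw [← Finset.sum_mul, sum_weight, one_mul, div_mul_cancel₀ _ (by positivity)]
      _ ≤ _ := by
          gcongr
          exact not_lt.1 hlt

lemma integral_sample_law (σ : Fin m → Bool) {n : ℕ} (F : (Fin n → X × ℝ) → ℝ) :
    ∫ D, F D ∂sample (H.law σ) n
      = ∑ v : Fin n → Option (Fin m × Bool),
          (∏ j, H.weight σ (v j)) * F fun j => H.atom (v j) := by
  rw [sample, law, pi_weightedDirac _ (H.weight_nonneg σ) (H.sum_weight σ),
    integral_weightedDirac _ fun v => Finset.prod_nonneg fun j _ => H.weight_nonneg σ _]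

lemma sum_mul_missProb_le_integral_excess (σ : Fin m → Bool) {n : ℕ}
    (fbar : (Fin n → X × ℝ) → X → ℝ) :
    ∑ i, H.mass * H.bias * H.missProb fbar σ i
      ≤ ∫ D, (misRisk (H.law σ) (fbar D) - misRisk (H.law σ) (bayes (H.eta σ)))
          ∂sample (H.law σ) n := by
  rw [integral_sample_law]
  simp only [missProb, excess_law, Finset.mul_sum]
  rw [Finset.sum_comm]
  refine Finset.sum_le_sum fun v _ => ?_
  rw [mul_add, Finset.mul_sum]
  refine le_add_of_nonneg_of_le (mul_nonneg (Finset.prod_nonneg fun j _ => H.weight_nonneg σ _)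
    (mul_nonneg H.one_sub_mul_mass_pos.le (by split_ifs <;> norm_num))) (le_of_eq ?_)
  exact Finset.sum_congr rfl fun i _ => by ring

lemma exists_le_integral_excess {n : ℕ} (hn : n * (H.mass * H.bias ^ 2) ≤ 1 / 4)
    (fbar : (Fin n → X × ℝ) → X → ℝ) :
    ∃ σ, m * H.mass * H.bias / 8
      ≤ ∫ D, (misRisk (H.law σ) (fbar D) - misRisk (H.law σ) (bayes (H.eta σ)))
          ∂sample (H.law σ) n := by
  obtain ⟨σ, hσ⟩ := exists_le_sum_of_le_add_flip (H.missProb fbar)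
    (H.one_fourth_le_missProb_add_missProb_flip hn fbar)
  refine ⟨σ, le_trans ?_ (H.sum_mul_missProb_le_integral_excess σ fbar)⟩
  rw [← Finset.mul_sum]
  nlinarith [mul_pos H.mass_pos H.bias_pos]

lemma iInf_excess_law_eq_zero {ι : Type*} [Finite ι] (g : ι → X → ℝ) (σ : Fin m → Bool)
    (hg : ∃ j, g j = bayes (H.eta σ)) :
    ⨅ j, (misRisk (H.law σ) (g j) - misRisk (H.law σ) (bayes (H.eta σ))) = 0 := by
  obtain ⟨j, hj⟩ := hg
  have : Nonempty ι := ⟨j⟩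
  refine le_antisymm ((ciInf_le (Finite.bddBelow_range _) j).trans (by rw [hj, sub_self]))
    (le_ciInf fun j => H.excess_law_nonneg σ _)

end Laws

end Hypercube

lemma sq_rpow_le_self {b κ : ℝ} (hb0 : 0 < b) (hb1 : b ≤ 1) (hκ : 1 ≤ κ) :
    (b ^ (κ / (2 * κ - 1))) ^ 2 ≤ b := by
  rw [← Real.rpow_natCast, ← Real.rpow_mul hb0.le]
  conv_rhs => rw [← Real.rpow_one b]
  refine Real.rpow_le_rpow_of_exponent_ge hb0 hb1 ?_
  rw [Nat.cast_ofNat, div_mul_eq_mul_div, le_div_iff₀ (by linarith)]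
  linarith

lemma log_le_two_mul_log_mul_log_two {M : ℕ} (hM : 2 ≤ M) :
    Real.log M ≤ 2 * Nat.log 2 M * Real.log 2 := by
  have hm : 1 ≤ Nat.log 2 M := Nat.log_pos (by norm_num) hM
  have hlt : (M : ℝ) < 2 ^ (2 * Nat.log 2 M) := by
    exact_mod_cast (Nat.lt_pow_succ_log_self (by norm_num) M).trans_le
      (Nat.pow_le_pow_right (by norm_num) (by omega))
  calc Real.log M ≤ Real.log (2 ^ (2 * Nat.log 2 M)) :=
        Real.log_le_log (by positivity) hlt.le
    _ = 2 * Nat.log 2 M * Real.log 2 := by rw [Real.log_pow]; push_cast; ring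

/-- The hypercube with `m = ⌊log₂ M⌋` vertices, `mass = 1 / (8 m)` and
`bias = (log M / n) ^ (κ / (2κ - 1))`. -/
lemma exists_hypercube_of_logb_le (α : Type*) [Infinite α] {κ : ℝ} (hκ : 1 ≤ κ) {M n : ℕ}
    (hM : 2 ≤ M) (hn : 2 * Real.logb 2 M ≤ n) :
    ∃ H : Hypercube α (Nat.log 2 M), n * (H.mass * H.bias ^ 2) ≤ 1 / 4 ∧
      1 / 64 * (Real.log M / n) ^ (κ / (2 * κ - 1)) ≤ Nat.log 2 M * H.mass * H.bias / 8 := by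
  set m := Nat.log 2 M
  have hm : (1 : ℝ) ≤ m := by exact_mod_cast Nat.log_pos (by norm_num) hM
  have hlogM : 0 < Real.log M := Real.log_pos (by exact_mod_cast hM)
  have hlog2 : Real.log 2 < 1 := by linarith [Real.log_two_lt_d9]
  have hlogb : Real.log M ≤ Real.logb 2 M := by
    rw [Real.logb, le_div_iff₀ (Real.log_pos one_lt_two)]
    nlinarith
  have hn0 : (0 : ℝ) < n := by linarith
  have hb0 : 0 < Real.log M / n := div_pos hlogM hn0
  have hb1 : Real.log M / n ≤ 1 := (div_le_one hn0).2 (by linarith)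
  set h := (Real.log M / n) ^ (κ / (2 * κ - 1))
  have hh0 : 0 < h := Real.rpow_pos_of_pos hb0 _
  have hh1 : h ≤ 1 := Real.rpow_le_one hb0.le hb1 (div_nonneg (by linarith) (by linarith))
  have hnh : n * h ^ 2 ≤ Real.log M := by
    have := mul_le_mul_of_nonneg_left (sq_rpow_le_self hb0 hb1 hκ) hn0.le
    rwa [mul_div_cancel₀ _ hn0.ne'] at this
  obtain ⟨H, hw, hh⟩ := Hypercube.exists_of_infinite α m (w := 1 / (8 * m))
    (by positivity) (by rw [← mul_div_assoc, mul_one, div_le_one (by positivity)]; linarith)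
    hh0 hh1
  refine ⟨H, ?_, ?_⟩
  · rw [hw, hh]
    calc (n : ℝ) * (1 / (8 * m) * h ^ 2) = n * h ^ 2 / (8 * m) := by ring
      _ ≤ 2 * m * Real.log 2 / (8 * m) :=
        div_le_div_of_nonneg_right (hnh.trans (log_le_two_mul_log_mul_log_two hM)) (by positivity)
      _ ≤ 1 / 4 := by
        rw [div_le_iff₀ (by positivity)]
        nlinarith [mul_le_mul_of_nonneg_left hlog2.le (by linarith : (0 : ℝ) ≤ m)]
  · rw [hw, hh]
    field_simp
    norm_num

lemma exists_surjective_of_card_le {α β : Type*} [Fintype α] [Fintype β] [Nonempty α]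
    (h : Fintype.card α ≤ Fintype.card β) : ∃ f : β → α, Function.Surjective f :=
  Function.exists_surjective_iff.2 ⟨inferInstance, Function.Embedding.nonempty_of_card_le h⟩

theorem lower_bound_bayes_aggregation_factor_general
    {X : Type*} [MeasurableSpace X] [MeasurableSingletonClass X] [Infinite X]
    (κ : ℝ) (hκ : 1 ≤ κ) (a : ℝ) :
    ∃ Ca : ℝ, 0 < Ca ∧
      ∀ M n : ℕ, 3 ≤ M → 2 * Real.logb 2 M ≤ n →
      ∃ f : Fin M → X → ℝ, (∀ j, Measurable (f j)) ∧ (∀ j x, f j x = 1 ∨ f j x = -1) ∧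
        ∀ fbar : (Fin n → X × ℝ) → X → ℝ,
          Measurable (fun p : (Fin n → X × ℝ) × X => fbar p.1 p.2) →
          (∀ D x, fbar D x = 1 ∨ fbar D x = -1) →
          ∃ (π : Measure (X × ℝ)) (η : X → ℝ) (_ : IsProbabilityMeasure π),
            IsClassif π η ∧ (∃ c₀ > 0, MA π η κ c₀) ∧
            2 * (1 + a) * (⨅ j, (misRisk π (f j) - misRisk π (bayes η)))
              + Ca * (Real.log M / n) ^ (κ / (2 * κ - 1))
              ≤ ∫ D, (misRisk π (fbar D) - misRisk π (bayes η)) ∂(sample π n) := by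
  refine ⟨1 / 64, by norm_num, fun M n hM hn => ?_⟩
  obtain ⟨H, hHn, hHrate⟩ := exists_hypercube_of_logb_le X hκ (by omega : 2 ≤ M) hn
  obtain ⟨pat, hpat⟩ := exists_surjective_of_card_le (α := Fin (Nat.log 2 M) → Bool)
    (β := Fin M) (by simpa using Nat.pow_log_le_self 2 (by omega : M ≠ 0))
  refine ⟨fun j => bayes (H.eta (pat j)), fun j => measurable_bayes (H.measurable_eta _),
    fun j => bayes_eq_one_or _, fun fbar _ _ => ?_⟩
  obtain ⟨σ, hσ⟩ := H.exists_le_integral_excess hHn fbar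
  refine ⟨H.law σ, H.eta σ, inferInstance, H.isClassif_law σ, H.margin_law σ (by linarith), ?_⟩
  obtain ⟨j, hj⟩ := hpat σ
  rw [H.iInf_excess_law_eq_zero _ σ ⟨j, by rw [hj]⟩, mul_zero, zero_add]
  exact hHrate.trans hσ

/-- Corollary 1, lower bound: lower bound with oracle factor 2(1+a) for
the excess Bayes risk; the constant C(a) > 0 depends only on a and κ. -/
theorem lower_bound_bayes_aggregation_factor
    {X : Type*} [MeasurableSpace X] [MeasurableSingletonClass X] [Infinite X]
    (κ : ℝ) (hκ : 1 ≤ κ) (a : ℝ) (ha : 0 < a) :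
    ∃ Ca : ℝ, 0 < Ca ∧
      ∀ M n : ℕ, 3 ≤ M → 2 * Real.logb 2 M ≤ n →
      ∃ f : Fin M → X → ℝ, (∀ j, Measurable (f j)) ∧ (∀ j x, f j x = 1 ∨ f j x = -1) ∧
        ∀ fbar : (Fin n → X × ℝ) → X → ℝ,
          Measurable (fun p : (Fin n → X × ℝ) × X => fbar p.1 p.2) →
          (∀ D x, fbar D x = 1 ∨ fbar D x = -1) →
          ∃ (π : Measure (X × ℝ)) (η : X → ℝ) (_ : IsProbabilityMeasure π),
            IsClassif π η ∧ (∃ c₀ > 0, MA π η κ c₀) ∧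
            2 * (1 + a) * (⨅ j, (misRisk π (f j) - misRisk π (bayes η)))
              + Ca * (Real.log M / n) ^ (κ / (2 * κ - 1))
              ≤ ∫ D, (misRisk π (fbar D) - misRisk π (bayes η)) ∂(sample π n) :=
  lower_bound_bayes_aggregation_factor_general κ hκ a

end AggClass
end
end
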